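/- Let σ > 0 and τ ∈ (0,1). Then for every y > 0: (i) V_τ(y) ≤ σ² + y², and (ii) V_τ(y) ≤ (σ²/y + y) T_τ(y) − T_τ(y)². -/
import Mathlib


open MeasureTheory ProbabilityTheory Real Filter Set

/-- The integral `I_k(y) = ∫₀¹ z^k (τ² + (1−τ²)z)⁻¹ exp(y² z/(2σ²)) dz`. -/
noncomputable def hsI (σ τ k y : ℝ) : ℝ :=
  ∫ z in (0:ℝ)..1, z ^ k * (τ ^ 2 + (1 - τ ^ 2) * z)⁻¹ * Real.exp (y ^ 2 * z / (2 * σ ^ 2))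

/-- The horseshoe estimator `T_τ(y) = y · I_{1/2}(y)/I_{−1/2}(y)`. -/
noncomputable def hsT (σ τ y : ℝ) : ℝ :=
  y * hsI σ τ (1/2) y / hsI σ τ (-(1/2)) y

/-- The horseshoe posterior variance
`V_τ(y) = σ² I_{1/2}/I_{−1/2} + y² (I_{3/2}/I_{−1/2} − (I_{1/2}/I_{−1/2})²)`. -/
noncomputable def hsV (σ τ y : ℝ) : ℝ :=
  σ ^ 2 * (hsI σ τ (1/2) y / hsI σ τ (-(1/2)) y)
    + y ^ 2 * (hsI σ τ (3/2) y / hsI σ τ (-(1/2)) y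
        - (hsI σ τ (1/2) y / hsI σ τ (-(1/2)) y) ^ 2)

/-- The law of `Y` with independent coordinates `Y_i ~ N(θ i, σ²)`. -/
noncomputable def gaussPi (σ : ℝ) {n : ℕ} (θ : Fin n → ℝ) : Measure (Fin n → ℝ) :=
  Measure.pi fun i => gaussianReal (θ i) (Real.toNNReal (σ ^ 2))

/-- `θ` is nearly black: at most `p` nonzero coordinates. -/
def nearlyBlack {n : ℕ} (θ : Fin n → ℝ) (p : ℕ) : Prop :=
  {i | θ i ≠ 0}.ncard ≤ p

/-- The horseshoe prior density on ℝ. -/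
noncomputable def hsPriorDensity (σ τ t : ℝ) : ℝ :=
  ∫ l in Set.Ioi (0:ℝ),
    (2 / (π * (1 + l ^ 2))) * (σ * τ * l * Real.sqrt (2 * π))⁻¹ *
      Real.exp (-(t ^ 2) / (2 * σ ^ 2 * τ ^ 2 * l ^ 2))

/-- The horseshoe posterior mass of a set `A` given data `y`. -/
noncomputable def hsPost (σ τ : ℝ) {n : ℕ} (y : Fin n → ℝ) (A : Set (Fin n → ℝ)) : ℝ :=
  (∫ θ in A, (∏ i, hsPriorDensity σ τ (θ i)) *
      Real.exp (-(∑ i, (y i - θ i) ^ 2) / (2 * σ ^ 2))) /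
  ∫ θ : Fin n → ℝ, (∏ i, hsPriorDensity σ τ (θ i)) *
      Real.exp (-(∑ i, (y i - θ i) ^ 2) / (2 * σ ^ 2))


lemma hsI_integrable (σ τ k y : ℝ) (hτ : τ ∈ Set.Ioo (0:ℝ) 1) (hk : (-1:ℝ) < k) :
    IntervalIntegrable (fun z : ℝ =>
      z ^ k * (τ ^ 2 + (1 - τ ^ 2) * z)⁻¹ * Real.exp (y ^ 2 * z / (2 * σ ^ 2)))
      volume 0 1 := by
  have h1 : IntervalIntegrable (fun z : ℝ => z ^ k) volume 0 1 :=
    intervalIntegral.intervalIntegrable_rpow' hk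
  have hg : ContinuousOn (fun z : ℝ =>
      (τ ^ 2 + (1 - τ ^ 2) * z)⁻¹ * Real.exp (y ^ 2 * z / (2 * σ ^ 2))) (Set.uIcc 0 1) := by
    apply ContinuousOn.mul
    · apply ContinuousOn.inv₀
      · exact (continuous_const.add (continuous_const.mul continuous_id)).continuousOn
      · intro x hx
        rw [Set.uIcc_of_le (by norm_num : (0:ℝ) ≤ 1)] at hx
        have h0 : (0:ℝ) < τ ^ 2 := pow_pos hτ.1 2
        have h2 : (0:ℝ) ≤ (1 - τ ^ 2) * x :=
          mul_nonneg (by nlinarith [hτ.1, hτ.2]) hx.1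
        nlinarith
    · exact (Real.continuous_exp.comp (by continuity)).continuousOn
  simpa only [mul_assoc] using h1.mul_continuousOn hg

lemma hsI_pos (σ τ k y : ℝ) (hτ : τ ∈ Set.Ioo (0:ℝ) 1) (hk : (-1:ℝ) < k) :
    0 < hsI σ τ k y := by
  apply intervalIntegral.intervalIntegral_pos_of_pos_on (hsI_integrable σ τ k y hτ hk)
  · intro x hx
    have hx0 := hx.1
    have : 0 < τ ^ 2 + (1 - τ ^ 2) * x :=
      add_pos_of_pos_of_nonneg (pow_pos hτ.1 2)
        (mul_nonneg (by nlinarith [hτ.1, hτ.2]) hx.1.le)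
    have := Real.rpow_pos_of_pos hx0 k
    positivity
  · norm_num

lemma hsI_mono (σ τ a b y : ℝ) (hτ : τ ∈ Set.Ioo (0:ℝ) 1)
    (hb : (-1:ℝ) < b) (hba : b ≤ a) (ha0 : a ≠ 0) (hb0 : b ≠ 0) :
    hsI σ τ a y ≤ hsI σ τ b y := by
  have ha : (-1:ℝ) < a := lt_of_lt_of_le hb hba
  apply intervalIntegral.integral_mono_on (by norm_num)
    (hsI_integrable σ τ a y hτ ha) (hsI_integrable σ τ b y hτ hb)
  intro x hx
  have hpow : x ^ a ≤ x ^ b := by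
    rcases eq_or_lt_of_le hx.1 with h | h
    · rw [← h, Real.zero_rpow ha0, Real.zero_rpow hb0]
    · exact Real.rpow_le_rpow_of_exponent_ge h hx.2 hba
  have h1 : 0 < τ ^ 2 + (1 - τ ^ 2) * x :=
    add_pos_of_pos_of_nonneg (pow_pos hτ.1 2)
      (mul_nonneg (by nlinarith [hτ.1, hτ.2]) hx.1)
  have h2 : (0:ℝ) ≤ (τ ^ 2 + (1 - τ ^ 2) * x)⁻¹ * Real.exp (y ^ 2 * x / (2 * σ ^ 2)) := by
    positivity
  calc x ^ a * (τ ^ 2 + (1 - τ ^ 2) * x)⁻¹ * Real.exp (y ^ 2 * x / (2 * σ ^ 2))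
      = x ^ a * ((τ ^ 2 + (1 - τ ^ 2) * x)⁻¹ * Real.exp (y ^ 2 * x / (2 * σ ^ 2))) := by ring
    _ ≤ x ^ b * ((τ ^ 2 + (1 - τ ^ 2) * x)⁻¹ * Real.exp (y ^ 2 * x / (2 * σ ^ 2))) :=
        mul_le_mul_of_nonneg_right hpow h2
    _ = x ^ b * (τ ^ 2 + (1 - τ ^ 2) * x)⁻¹ * Real.exp (y ^ 2 * x / (2 * σ ^ 2)) := by ring

/-- Lemma A.4: upper bounds on the horseshoe posterior variance. -/
theorem hsV_upper_bounds (σ τ : ℝ) (hσ : 0 < σ) (hτ : τ ∈ Set.Ioo (0:ℝ) 1) :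
    ∀ y : ℝ, 0 < y →
      hsV σ τ y ≤ σ ^ 2 + y ^ 2 ∧
      hsV σ τ y ≤ (σ ^ 2 / y + y) * hsT σ τ y - (hsT σ τ y) ^ 2 := by
  intro y hy
  have hA : 0 < hsI σ τ (-(1/2)) y := hsI_pos σ τ _ y hτ (by norm_num)
  have hB : 0 < hsI σ τ (1/2) y := hsI_pos σ τ _ y hτ (by norm_num)
  have hC : 0 < hsI σ τ (3/2) y := hsI_pos σ τ _ y hτ (by norm_num)
  have hBA : hsI σ τ (1/2) y ≤ hsI σ τ (-(1/2)) y :=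
    hsI_mono σ τ _ _ y hτ (by norm_num) (by norm_num) (by norm_num) (by norm_num)
  have hCB : hsI σ τ (3/2) y ≤ hsI σ τ (1/2) y :=
    hsI_mono σ τ _ _ y hτ (by norm_num) (by norm_num) (by norm_num) (by norm_num)
  unfold hsV hsT
  set A := hsI σ τ (-(1/2)) y
  set B := hsI σ τ (1/2) y
  set C := hsI σ τ (3/2) y
  have hr1 : B / A ≤ 1 := (div_le_one hA).2 hBA
  have hr0 : 0 < B / A := div_pos hB hA
  have hs1 : C / A ≤ 1 := (div_le_one hA).2 (hCB.trans hBA)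
  have hsr : C / A ≤ B / A := div_le_div_of_nonneg_right hCB hA.le
  have hσ2 : (0:ℝ) < σ ^ 2 := pow_pos hσ 2
  have hy2 : (0:ℝ) < y ^ 2 := pow_pos hy 2
  constructor
  · nlinarith [mul_le_mul_of_nonneg_left hr1 hσ2.le,
      mul_le_mul_of_nonneg_left hs1 hy2.le,
      mul_nonneg hy2.le (sq_nonneg (B / A))]
  · have key : (σ ^ 2 / y + y) * (y * B / A) - (y * B / A) ^ 2
        = σ ^ 2 * (B / A) + y ^ 2 * (B / A) - y ^ 2 * (B / A) ^ 2 := by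
      field_simp
    rw [key]
    nlinarith [mul_le_mul_of_nonneg_left hsr hy2.le]
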